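/- For the one-dimensional Gaussian N(μ, σ²) and a bounded continuous function f, the derivative of J(μ) = E_{x~N(μ,σ²)}[f(x)] with respect to μ equals σ⁻² E[f(x)(x − μ)]. -/

import Mathlib

/-!
Differentiate under the integral sign. The `m`-derivative of the density is
`gaussPdf1 m σ x * (x - m) / σ²`, and for `|m - μ| ≤ 1` the inequality
`(x - μ)² ≤ 2 (x - m)² + 2 (m - μ)²` dominates it, uniformly in `m`, by a constant multiple of
the integrable function `(|x - μ| + 1) exp (-(x - μ)² / (4σ²))`; boundedness of `f` carries
this domination over to the integrand.
-/

open MeasureTheory Real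

/-- Density of the one-dimensional Gaussian `N(m, σ²)`. -/
noncomputable def gaussPdf1 (m σ x : ℝ) : ℝ :=
  (Real.sqrt (2 * Real.pi * σ ^ 2))⁻¹ * Real.exp (-(x - m) ^ 2 / (2 * σ ^ 2))

open ProbabilityTheory

lemma gaussPdf1_nonneg (m σ x : ℝ) : 0 ≤ gaussPdf1 m σ x :=
  gaussianPDFReal_nonneg m ⟨σ ^ 2, sq_nonneg σ⟩ x

lemma measurable_gaussPdf1 (m σ : ℝ) : Measurable (gaussPdf1 m σ) :=
  measurable_gaussianPDFReal m ⟨σ ^ 2, sq_nonneg σ⟩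

lemma integrable_gaussPdf1 (m σ : ℝ) : Integrable (gaussPdf1 m σ) :=
  integrable_gaussianPDFReal m ⟨σ ^ 2, sq_nonneg σ⟩

lemma hasDerivAt_gaussPdf1 (σ x m : ℝ) :
    HasDerivAt (fun m => gaussPdf1 m σ x) (gaussPdf1 m σ x * ((x - m) / σ ^ 2)) m := by
  have h := ((((hasDerivAt_id m).const_sub x).pow 2).neg.div_const (2 * σ ^ 2)).exp.const_mul
    (√(2 * π * σ ^ 2))⁻¹
  refine h.congr_deriv ?_
  simp only [gaussPdf1, Pi.neg_apply, Pi.pow_apply, id]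
  ring

lemma gaussPdf1_le_of_abs_sub_le {σ m μ δ : ℝ} (hσ : 0 < σ) (hm : |m - μ| ≤ δ) (x : ℝ) :
    gaussPdf1 m σ x ≤
      (√(2 * π * σ ^ 2))⁻¹ * exp (δ ^ 2 / (2 * σ ^ 2)) * exp (-(4 * σ ^ 2)⁻¹ * (x - μ) ^ 2) := by
  have hσ2 : 0 < σ ^ 2 := by positivity
  have hmδ : (m - μ) ^ 2 ≤ δ ^ 2 := sq_le_sq' (abs_le.mp hm).1 (abs_le.mp hm).2
  have hsq : (x - μ) ^ 2 ≤ 2 * (x - m) ^ 2 + 2 * (m - μ) ^ 2 := by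
    nlinarith [sq_nonneg (x - m - (m - μ))]
  rw [gaussPdf1, mul_assoc _ (exp _), ← exp_add]
  gcongr
  rw [div_add' _ _ _ (by positivity), div_le_div_iff_of_pos_right (by positivity)]
  field_simp
  nlinarith

lemma integrable_abs_add_mul_exp_neg_mul_sq {b : ℝ} (hb : 0 < b) (δ : ℝ) :
    Integrable fun y : ℝ => (|y| + δ) * exp (-b * y ^ 2) := by
  have h := (integrable_mul_exp_neg_mul_sq hb).abs.add ((integrable_exp_neg_mul_sq hb).const_mul δ)
  refine h.congr (.of_forall fun y => ?_)
  simp only [Pi.add_apply, abs_mul, abs_exp]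
  ring

theorem hasDerivAt_integral_mul_gaussPdf1 {f : ℝ → ℝ} (hf : AEStronglyMeasurable f) {B : ℝ}
    (hB : ∀ᵐ x, |f x| ≤ B) {σ : ℝ} (hσ : 0 < σ) (μ : ℝ) :
    HasDerivAt (fun m => ∫ x, f x * gaussPdf1 m σ x)
      (∫ x, f x * gaussPdf1 μ σ x * ((x - μ) / σ ^ 2)) μ := by
  set C := (√(2 * π * σ ^ 2))⁻¹ * exp (1 ^ 2 / (2 * σ ^ 2))
  have h_bound : ∀ᵐ x, ∀ m ∈ Metric.ball μ 1, ‖f x * gaussPdf1 m σ x * ((x - m) / σ ^ 2)‖ ≤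
      B / σ ^ 2 * C * ((|x - μ| + 1) * exp (-(4 * σ ^ 2)⁻¹ * (x - μ) ^ 2)) := by
    filter_upwards [hB] with x hfx m hm
    have hm : |m - μ| ≤ 1 := (mem_ball_iff_norm.mp hm).le
    have hxm : |x - m| ≤ |x - μ| + 1 := by
      linarith [abs_sub_le x μ m, abs_sub_comm μ m]
    rw [norm_mul, norm_mul, norm_div, Real.norm_eq_abs, Real.norm_eq_abs, Real.norm_eq_abs,
      abs_of_nonneg (gaussPdf1_nonneg m σ x), Real.norm_of_nonneg (sq_nonneg σ)]
    have hpdf := gaussPdf1_le_of_abs_sub_le hσ hm x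
    have hB0 : 0 ≤ B := (abs_nonneg _).trans hfx
    calc |f x| * gaussPdf1 m σ x * (|x - m| / σ ^ 2)
        ≤ B * (C * exp (-(4 * σ ^ 2)⁻¹ * (x - μ) ^ 2)) * ((|x - μ| + 1) / σ ^ 2) := by
          gcongr
          exact gaussPdf1_nonneg m σ x
      _ = _ := by ring
  exact (hasDerivAt_integral_of_dominated_loc_of_deriv_le (F := fun m x => f x * gaussPdf1 m σ x)
    (Metric.ball_mem_nhds μ one_pos)
    (.of_forall fun m => hf.mul ((measurable_gaussPdf1 m σ).aestronglyMeasurable))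
    ((integrable_gaussPdf1 μ σ).bdd_mul hf hB)
    ((hf.mul ((measurable_gaussPdf1 μ σ).aestronglyMeasurable)).mul (by fun_prop))
    h_bound
    (((integrable_abs_add_mul_exp_neg_mul_sq (by positivity) 1).comp_sub_right μ).const_mul _)
    (.of_forall fun x m _ => (hasDerivAt_gaussPdf1 σ x m).const_mul (f x) |>.congr_deriv
      (mul_assoc _ _ _).symm)).2

/-- 1-D: `d/dμ E_{N(μ,σ²)}[f] = σ⁻² E[f(x)(x-μ)]` for bounded continuous `f`. -/
theorem deriv_expected_fitness_1d (f : ℝ → ℝ) (hc : Continuous f)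
    (B : ℝ) (hB : ∀ x, |f x| ≤ B) (σ : ℝ) (hσ : 0 < σ) (μ : ℝ) :
    deriv (fun m : ℝ => ∫ x : ℝ, f x * gaussPdf1 m σ x) μ
      = (σ ^ 2)⁻¹ * ∫ x : ℝ, f x * gaussPdf1 μ σ x * (x - μ) := by
  rw [(hasDerivAt_integral_mul_gaussPdf1 hc.aestronglyMeasurable (.of_forall hB) hσ μ).deriv,
    ← integral_const_mul]
  congr 1 with x
  ring
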